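/- Let 𝔤 be a finite-dimensional real Lie algebra admitting a derivation D : 𝔤 → 𝔤 (a linear map with D[x,y] = [Dx,y] + [x,Dy] for all x,y) such that D ∘ D = c·id for some nonzero real number c. Then 𝔤 is abelian, i.e. [x,y] = 0 for all x,y ∈ 𝔤. -/

import Mathlib

/-!
Expanding `D² ⁅x, y⁆` by the Leibniz rule gives `2 ⁅D x, D y⁆ = -c ⁅x, y⁆`. Applying this
identity to `D x, D y` and using `D² = c` once more yields `4 c² ⁅x, y⁆ = c² ⁅x, y⁆`,
so `3 c² ⁅x, y⁆ = 0`.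
-/

section

variable {R L : Type*} [CommRing R] [LieRing L] [LieAlgebra R L] {D : L →ₗ[R] L}

theorem apply_apply_lie_of_leibniz (hder : ∀ x y : L, D ⁅x, y⁆ = ⁅D x, y⁆ + ⁅x, D y⁆)
    (x y : L) :
    D (D ⁅x, y⁆) = ⁅D (D x), y⁆ + (2 : R) • ⁅D x, D y⁆ + ⁅x, D (D y)⁆ := by
  rw [hder, map_add, hder, hder, two_smul]
  abel

variable {c : R} (hder : ∀ x y : L, D ⁅x, y⁆ = ⁅D x, y⁆ + ⁅x, D y⁆)
  (hsq : ∀ x : L, D (D x) = c • x)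
include hder hsq

theorem two_smul_lie_apply_apply_eq (x y : L) :
    (2 : R) • ⁅D x, D y⁆ = -c • ⁅x, y⁆ := by
  have h := apply_apply_lie_of_leibniz hder x y
  rw [hsq, hsq, hsq, smul_lie, lie_smul] at h
  linear_combination (norm := module) -h

theorem three_mul_sq_smul_lie_eq_zero (x y : L) : (3 * c ^ 2) • ⁅x, y⁆ = 0 := by
  have h := two_smul_lie_apply_apply_eq hder hsq (D x) (D y)
  rw [hsq, hsq, smul_lie, lie_smul] at h
  linear_combination (norm := module) (2 : R) • h - c • two_smul_lie_apply_apply_eq hder hsq x y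

end

theorem lie_eq_zero_of_derivation_sq_eq_smul {K L : Type*} [Field K] [LieRing L]
    [LieAlgebra K L] {D : L →ₗ[K] L} {c : K} (hder : ∀ x y : L, D ⁅x, y⁆ = ⁅D x, y⁆ + ⁅x, D y⁆)
    (hsq : ∀ x : L, D (D x) = c • x) (h3 : (3 : K) ≠ 0) (hc : c ≠ 0) (x y : L) :
    ⁅x, y⁆ = 0 :=
  (smul_eq_zero.mp (three_mul_sq_smul_lie_eq_zero hder hsq x y)).resolve_left
    (mul_ne_zero h3 (pow_ne_zero 2 hc))

theorem stmt_0 (L : Type*) [LieRing L] [LieAlgebra ℝ L]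
    (D : L →ₗ[ℝ] L)
    (hder : ∀ x y : L, D ⁅x, y⁆ = ⁅D x, y⁆ + ⁅x, D y⁆)
    (c : ℝ) (hc : c ≠ 0)
    (hsq : D ∘ₗ D = c • LinearMap.id) :
    ∀ x y : L, ⁅x, y⁆ = 0 :=
  lie_eq_zero_of_derivation_sq_eq_smul hder (LinearMap.congr_fun hsq)
    three_ne_zero hc
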